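/- Fix ħ ∈ ℂ. On H = ℂ((z⁻¹)) define the ℂ-linear operators W := z⁻¹·(d/dz) − 1/(2z²), W₁ := (1/2)·M_z∘W∘W + W∘(d/dz) (explicitly W₁ = 5/(8z³) − (3/(2z²))·d/dz + (3/(2z))·d²/dz²), W₂ := (1/2)·W∘W∘W, and the canonical Kac–Schwarz operators of the Kontsevich–Witten model Q := M_z + ħ·W and P := d/dz + (ħ/2)·W∘W. Define operators G^{(k)} recursively by G^{(0)} := id, G^{(−1)} := 0 and G^{(k)} := (1/(3k))·(ħ·W₁∘G^{(k−1)} + ħ²·W₂∘G^{(k−2)}) for k ≥ 1. Then: (i) for every polynomial p ∈ ℂ[z], the Laurent series G^{(k)}·p has z-degree ≤ deg p − 3k, so the sum G·p := Σ_{k≥0} G^{(k)}·p is a well-defined element of ℂ((z⁻¹)); and (ii) Q·(P·(G·p)) = G·(z·p') for every p ∈ ℂ[z], i.e. Q∘P∘G = G∘(z·d/dz) as maps on ℂ[z]. (Thus the homogeneous components of Sato's group element of the Kontsevich–Witten tau-function satisfy the three-term recursion G^{(k)} = (ħW₁G^{(k−1)} + ħ²W₂G^{(k−2)})/(3k).)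 -/

import Mathlib

noncomputable section

/-- `H = ℂ((z⁻¹))`: formal Laurent series in `u = z⁻¹`. -/
abbrev H : Type := LaurentSeries ℂ

/-- The coefficient of `z^k` of a Laurent series in `z⁻¹`. -/
def zc (f : H) (k : ℤ) : ℂ := f.coeff (-k)

/-- `deg_z f ≤ d`: all coefficients of `z^k` with `k > d` vanish. -/
def degLE (f : H) (d : ℤ) : Prop := ∀ k : ℤ, d < k → zc f k = 0

/-- The element `z` of `H`. -/
def zH : H := HahnSeries.single (-1 : ℤ) (1 : ℂ)

/-- Multiplication by `z` as a `ℂ`-linear endomorphism of `H`. -/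
def Mz : H →ₗ[ℂ] H where
  toFun f := zH * f
  map_add' f g := mul_add zH f g
  map_smul' c f := by
    simp only [RingHom.id_apply, ← HahnSeries.single_zero_mul_eq_smul]
    ring

/-- The derivative `d/dz` as a `ℂ`-linear endomorphism of `H`. -/
def Dz : H →ₗ[ℂ] H where
  toFun f :=
    { coeff := fun n => ((1 - n : ℤ) : ℂ) * f.coeff (n - 1)
      isPWO_support' := by
        refine Set.IsPWO.mono (Set.IsPWO.image_of_monotone f.isPWO_support'
          (f := fun m : ℤ => m + 1) (fun a b hab => by dsimp only; omega)) ?_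
        intro n hn
        simp only [Function.mem_support] at hn
        refine ⟨n - 1, ?_, by ring⟩
        intro h
        exact hn (by rw [h, mul_zero]) }
  map_add' f g := by
    ext n
    simp [HahnSeries.coeff_add, mul_add]
  map_smul' c f := by
    ext n
    simp [HahnSeries.coeff_smul]
    ring

/-- `H₊ = ℂ[z]`: series with no negative powers of `z`. -/
def Hplus : Submodule ℂ H where
  carrier := {f | ∀ k : ℤ, k < 0 → zc f k = 0}
  add_mem' := by
    intro f g hf hg k hk
    simp only [Set.mem_setOf_eq, zc, HahnSeries.coeff_add] at *
    rw [hf k hk, hg k hk, add_zero]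
  zero_mem' := by intro k hk; simp [zc]
  smul_mem' := by
    intro c f hf k hk
    simp only [Set.mem_setOf_eq, zc, HahnSeries.coeff_smul] at *
    rw [hf k hk, smul_zero]

/-- `H₋ = z⁻¹ℂ[[z⁻¹]]`: series with only negative powers of `z`. -/
def Hminus : Submodule ℂ H where
  carrier := {f | ∀ k : ℤ, 0 ≤ k → zc f k = 0}
  add_mem' := by
    intro f g hf hg k hk
    simp only [Set.mem_setOf_eq, zc, HahnSeries.coeff_add] at *
    rw [hf k hk, hg k hk, add_zero]
  zero_mem' := by intro k hk; simp [zc]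
  smul_mem' := by
    intro c f hf k hk
    simp only [Set.mem_setOf_eq, zc, HahnSeries.coeff_smul] at *
    rw [hf k hk, smul_zero]

/-- The projection `π₊ : H → H₊` discarding all negative powers of `z`. -/
def piPlus : H →ₗ[ℂ] H where
  toFun f :=
    { coeff := fun n => if 0 < n then 0 else f.coeff n
      isPWO_support' := by
        refine Set.IsPWO.mono f.isPWO_support' ?_
        intro n hn
        simp only [Function.mem_support] at hn
        by_cases h : 0 < n
        · exact absurd (if_pos h) hn
        · rw [if_neg h] at hn; exact hn }
  map_add' f g := by
    ext n
    by_cases h : 0 < n <;> simp [HahnSeries.coeff_add, h]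
  map_smul' c f := by
    ext n
    by_cases h : 0 < n <;> simp [HahnSeries.coeff_smul, h]

/-- The statement that `A` is the operator `Σ_{k≥0} a_k (d/dz)^k`, where all
`deg a_k ≤ e`: partial sums converge to `A f` coefficientwise. -/
def IsOp (a : ℕ → H) (e : ℤ) (A : H →ₗ[ℂ] H) : Prop :=
  (∀ k, degLE (a k) e) ∧
  ∀ (f : H) (d : ℤ), degLE f d → ∀ N : ℕ,
    degLE (A f - ∑ k ∈ Finset.range N, a k * ((Dz ^ k) f)) (d + e - N)

/-- The operator `A` stabilizes the subspace `W`. -/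
def Stab (A : H →ₗ[ℂ] H) (W : Submodule ℂ H) : Prop := ∀ f ∈ W, A f ∈ W

/-- The big cell of the Sato Grassmannian: `π₊` restricts to a bijection of `W` onto `ℂ[z]`. -/
def BigCell (W : Submodule ℂ H) : Prop :=
  Set.BijOn piPlus (W : Set H) (Hplus : Set H)

/-- The pair `(P, Q)` belongs to `Gr_𝒟`. -/
def GrD (P Q : H →ₗ[ℂ] H) : Prop :=
  (∃ a : ℕ → H, IsOp a (-2) (P - Dz)) ∧
  (∃ b : ℕ → H, IsOp b (-1) (Q - Mz)) ∧
  P ∘ₗ Q - Q ∘ₗ P = LinearMap.id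

/-- The operator `W = z⁻¹ d/dz - 1/(2z²)`. -/
def Wop : H →ₗ[ℂ] H where
  toFun f := HahnSeries.single (1 : ℤ) (1 : ℂ) * Dz f
    - (1 / 2 : ℂ) • (HahnSeries.single (2 : ℤ) (1 : ℂ) * f)
  map_add' f g := by
    simp only [map_add, mul_add, smul_add]
    ring
  map_smul' c f := by
    show HahnSeries.single (1 : ℤ) (1 : ℂ) * Dz (c • f)
        - (1 / 2 : ℂ) • (HahnSeries.single (2 : ℤ) (1 : ℂ) * (c • f)) = _
    rw [map_smul]
    simp only [RingHom.id_apply, ← HahnSeries.single_zero_mul_eq_smul]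
    ring

/-- `W₁ = (1/2) M_z W² + W d/dz`. -/
def W1op : H →ₗ[ℂ] H := (1 / 2 : ℂ) • (Mz ∘ₗ Wop ∘ₗ Wop) + Wop ∘ₗ Dz

/-- `W₂ = (1/2) W³`. -/
def W2op : H →ₗ[ℂ] H := (1 / 2 : ℂ) • (Wop ∘ₗ Wop ∘ₗ Wop)

/-- The recursively defined homogeneous components `G^{(k)}` of Sato's group element of the
Kontsevich–Witten tau-function: `G^{(0)} = id`, `G^{(-1)} = 0`,
`G^{(k)} = (ħ W₁ G^{(k-1)} + ħ² W₂ G^{(k-2)})/(3k)`. -/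
def Gsato (h : ℂ) : ℕ → (H →ₗ[ℂ] H)
  | 0 => LinearMap.id
  | 1 => (1 / 3 : ℂ) • (h • (W1op ∘ₗ Gsato h 0))
  | (k + 2) =>
      (1 / (3 * ((k : ℂ) + 2))) •
        (h • (W1op ∘ₗ Gsato h (k + 1)) + (h ^ 2) • (W2op ∘ₗ Gsato h k))

/-! `Q ∘ P = z d/dz + ħW₁ + ħ²W₂`, and every `G^{(k)}` is homogeneous of degree `-3k`,
so `(Q ∘ P) G^{(k)} - G^{(k)} (z d/dz) = -3k G^{(k)} + ħW₁G^{(k)} + ħ²W₂G^{(k)}`. By the recursion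
these defects telescope: their sum over `k ≤ N` is `3(N+1) G^{(N+1)} + ħ²W₂G^{(N)}`, which lowers
degrees by at least `3(N+1)`. As `Q ∘ P` does not raise degrees, `Q P G p` and `G (z p')` then agree
in every degree above `deg p - 3(N+1)`, for every `N`. -/

open HahnSeries Finset

theorem degLE_iff {f : H} {d : ℤ} : degLE f d ↔ ∀ n < -d, f.coeff n = 0 :=
  ⟨fun hf n hn => by simpa [zc] using hf (-n) (by omega), fun hf k hk => hf (-k) (by omega)⟩

theorem degLE.mono {f : H} {d e : ℤ} (hf : degLE f d) (hde : d ≤ e) : degLE f e :=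
  fun k hk => hf k (hde.trans_lt hk)

theorem degLE.add {f g : H} {d : ℤ} (hf : degLE f d) (hg : degLE g d) : degLE (f + g) d := by
  rw [degLE_iff] at *
  intro n hn
  rw [coeff_add, hf n hn, hg n hn, add_zero]

theorem degLE.sub {f g : H} {d : ℤ} (hf : degLE f d) (hg : degLE g d) : degLE (f - g) d := by
  rw [degLE_iff] at *
  intro n hn
  rw [coeff_sub, hf n hn, hg n hn, sub_zero]

theorem degLE.smul {f : H} {d : ℤ} (c : ℂ) (hf : degLE f d) : degLE (c • f) d := by
  rw [degLE_iff] at *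
  intro n hn
  rw [coeff_smul, hf n hn, smul_zero]

theorem degLE_neg_order (f : H) : degLE f (-f.order) :=
  degLE_iff.mpr fun _ hn => coeff_eq_zero_of_lt_order (by omega)

theorem eq_zero_of_forall_degLE {f : H} {d : ℤ} (hf : ∀ N : ℕ, degLE f (d - N)) : f = 0 := by
  ext n
  exact degLE_iff.mp (hf (d + n + 1).toNat) n (by omega)

def summableFamilyOfDegLE (F : ℕ → H) (d : ℤ) (hF : ∀ k, degLE (F k) (d - k)) :
    SummableFamily ℤ ℂ ℕ where
  toFun := F
  isPWO_iUnion_support' := (bddBelow_Ici (a := -d)).isWF.isPWO.mono <|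
    Set.iUnion_subset fun k n hn =>
      not_lt.mp fun hlt => hn (degLE_iff.mp ((hF k).mono (by omega)) n hlt)
  finite_co_support' n := (Set.finite_Iic (d + n).toNat).subset fun k hk =>
    Set.mem_Iic.mpr <| not_lt.mp fun hlt => hk (degLE_iff.mp (hF k) n (by omega))

theorem degLE_hsum_sub_sum (s : SummableFamily ℤ ℂ ℕ) {N : ℕ} {e : ℤ}
    (hs : ∀ k, N ≤ k → degLE (s k) e) : degLE (s.hsum - ∑ k ∈ range N, s k) e := by
  rw [degLE_iff]
  intro n hn
  rw [coeff_sub, SummableFamily.coeff_hsum_eq_sum_of_subset (t := range N), coeff_sum, sub_self]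
  intro k hk
  by_contra hkN
  exact hk (degLE_iff.mp (hs k (by simpa using hkN)) n hn)

/-- Homogeneity of degree `r`, coefficientwise; recall that `f.coeff n` is the coefficient of
`z^(-n)`. -/
def IsHomogeneousOp (A : H →ₗ[ℂ] H) (r : ℤ) : Prop :=
  ∃ c : ℤ → ℂ, ∀ f n, (A f).coeff n = c n * f.coeff (n + r)

def DegBoundedOp (A : H →ₗ[ℂ] H) (r : ℤ) : Prop :=
  ∀ ⦃f d⦄, degLE f d → degLE (A f) (d + r)

section OperatorDegree

variable {A B : H →ₗ[ℂ] H} {r s : ℤ}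

theorem IsHomogeneousOp.comp (hA : IsHomogeneousOp A r) (hB : IsHomogeneousOp B s) :
    IsHomogeneousOp (A ∘ₗ B) (r + s) := by
  obtain ⟨a, ha⟩ := hA
  obtain ⟨b, hb⟩ := hB
  exact ⟨fun n => a n * b (n + r), fun f n => by
    rw [LinearMap.comp_apply, ha, hb, ← add_assoc, mul_assoc]⟩

theorem IsHomogeneousOp.add (hA : IsHomogeneousOp A r) (hB : IsHomogeneousOp B r) :
    IsHomogeneousOp (A + B) r := by
  obtain ⟨a, ha⟩ := hA
  obtain ⟨b, hb⟩ := hB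
  exact ⟨a + b, fun f n => by rw [LinearMap.add_apply, coeff_add, ha, hb, Pi.add_apply, add_mul]⟩

theorem IsHomogeneousOp.smul (c : ℂ) (hA : IsHomogeneousOp A r) : IsHomogeneousOp (c • A) r := by
  obtain ⟨a, ha⟩ := hA
  exact ⟨c • a, fun f n => by
    rw [LinearMap.smul_apply, coeff_smul, ha, Pi.smul_apply, smul_eq_mul, smul_eq_mul, mul_assoc]⟩

theorem isHomogeneousOp_id : IsHomogeneousOp LinearMap.id 0 :=
  ⟨1, fun f n => by simp⟩

theorem IsHomogeneousOp.degBoundedOp (hA : IsHomogeneousOp A r) : DegBoundedOp A r := by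
  obtain ⟨a, ha⟩ := hA
  intro f d hf
  rw [degLE_iff] at *
  intro n hn
  rw [ha, hf (n + r) (by omega), mul_zero]

theorem DegBoundedOp.mono (hA : DegBoundedOp A r) (hrs : r ≤ s) : DegBoundedOp A s :=
  fun _ _ hf => (hA hf).mono (by omega)

theorem DegBoundedOp.add (hA : DegBoundedOp A r) (hB : DegBoundedOp B r) :
    DegBoundedOp (A + B) r :=
  fun _ _ hf => (hA hf).add (hB hf)

theorem DegBoundedOp.smul (c : ℂ) (hA : DegBoundedOp A r) : DegBoundedOp (c • A) r :=
  fun _ _ hf => (hA hf).smul c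

end OperatorDegree

theorem isHomogeneousOp_Dz : IsHomogeneousOp Dz (-1) :=
  ⟨fun n => ((1 - n : ℤ) : ℂ), fun f n => by rw [← sub_eq_add_neg]; rfl⟩

theorem isHomogeneousOp_Mz : IsHomogeneousOp Mz 1 :=
  ⟨1, fun f n => by simp [Mz, zH, coeff_single_mul]⟩

theorem isHomogeneousOp_Wop : IsHomogeneousOp Wop (-2) :=
  ⟨fun n => (2 - n : ℂ) - 1 / 2, fun f n => by
    simp only [Wop, Dz, LinearMap.coe_mk, AddHom.coe_mk, coeff_sub', coeff_smul', Pi.sub_apply,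
      Pi.smul_apply, coeff_single_mul, one_mul, smul_eq_mul]
    push_cast
    ring_nf⟩

theorem isHomogeneousOp_W1op : IsHomogeneousOp W1op (-3) :=
  ((isHomogeneousOp_Mz.comp (isHomogeneousOp_Wop.comp isHomogeneousOp_Wop)).smul _).add
    (isHomogeneousOp_Wop.comp isHomogeneousOp_Dz)

theorem isHomogeneousOp_W2op : IsHomogeneousOp W2op (-6) :=
  (isHomogeneousOp_Wop.comp (isHomogeneousOp_Wop.comp isHomogeneousOp_Wop)).smul _

def euler : H →ₗ[ℂ] H := Mz ∘ₗ Dz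

theorem isHomogeneousOp_euler : IsHomogeneousOp euler 0 :=
  isHomogeneousOp_Mz.comp isHomogeneousOp_Dz

theorem coeff_euler (f : H) (n : ℤ) : (euler f).coeff n = -n * f.coeff n := by
  simp [euler, Mz, zH, Dz, coeff_single_mul]

theorem IsHomogeneousOp.euler_comp {A : H →ₗ[ℂ] H} {r : ℤ} (hA : IsHomogeneousOp A r) :
    euler ∘ₗ A = A ∘ₗ euler + (r : ℂ) • A := by
  obtain ⟨a, ha⟩ := hA
  ext f n
  simp only [LinearMap.comp_apply, LinearMap.add_apply, LinearMap.smul_apply, coeff_add,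
    coeff_smul, coeff_euler, ha, smul_eq_mul]
  push_cast
  ring

theorem kacSchwarz_comp (h : ℂ) :
    (Mz + h • Wop) ∘ₗ (Dz + (h / 2) • (Wop ∘ₗ Wop)) = euler + h • W1op + h ^ 2 • W2op := by
  ext1 f
  simp only [W1op, W2op, euler, LinearMap.comp_apply, LinearMap.add_apply, LinearMap.smul_apply,
    map_add, map_smul]
  module

theorem degBoundedOp_kacSchwarz (h : ℂ) :
    DegBoundedOp (euler + h • W1op + h ^ 2 • W2op) 0 :=
  (isHomogeneousOp_euler.degBoundedOp.add ((isHomogeneousOp_W1op.degBoundedOp.mono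
    (by norm_num)).smul h)).add ((isHomogeneousOp_W2op.degBoundedOp.mono (by norm_num)).smul _)

section Sato

variable (h : ℂ)

theorem smul_Gsato_one : (3 : ℂ) • Gsato h 1 = h • (W1op ∘ₗ Gsato h 0) := by
  rw [Gsato.eq_2, smul_smul]
  norm_num

theorem smul_Gsato_add_two (k : ℕ) :
    (3 * ((k : ℂ) + 2)) • Gsato h (k + 2) =
      h • (W1op ∘ₗ Gsato h (k + 1)) + h ^ 2 • (W2op ∘ₗ Gsato h k) := by
  have hk : (3 * ((k : ℂ) + 2)) ≠ 0 := by norm_cast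
  rw [Gsato, smul_smul, mul_one_div_cancel hk, one_smul]

theorem isHomogeneousOp_Gsato : ∀ k : ℕ, IsHomogeneousOp (Gsato h k) (-(3 * k))
  | 0 => isHomogeneousOp_id
  | 1 => ((isHomogeneousOp_W1op.comp isHomogeneousOp_id).smul h).smul _
  | k + 2 => by
    have hW1 := isHomogeneousOp_W1op.comp (isHomogeneousOp_Gsato (k + 1))
    have hW2 := isHomogeneousOp_W2op.comp (isHomogeneousOp_Gsato k)
    rw [show -3 + -(3 * ((k + 1 : ℕ) : ℤ)) = -(3 * (k + 2 : ℕ)) by push_cast; ring] at hW1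
    rw [show -6 + -(3 * (k : ℤ)) = -(3 * (k + 2 : ℕ)) by push_cast; ring] at hW2
    exact ((hW1.smul h).add (hW2.smul (h ^ 2))).smul _

theorem degLE_Gsato (k : ℕ) {f : H} {d : ℤ} (hf : degLE f d) :
    degLE (Gsato h k f) (d - 3 * k) :=
  (isHomogeneousOp_Gsato h k).degBoundedOp hf

theorem kacSchwarz_comp_Gsato_sub (k : ℕ) :
    (euler + h • W1op + h ^ 2 • W2op) ∘ₗ Gsato h k - Gsato h k ∘ₗ euler =
      (-(3 * k : ℂ)) • Gsato h k + h • (W1op ∘ₗ Gsato h k) + h ^ 2 • (W2op ∘ₗ Gsato h k) := by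
  rw [LinearMap.add_comp, LinearMap.add_comp, LinearMap.smul_comp, LinearMap.smul_comp,
    (isHomogeneousOp_Gsato h k).euler_comp]
  push_cast
  abel

theorem sum_kacSchwarz_comp_Gsato_sub : ∀ N : ℕ,
    ∑ k ∈ range (N + 1), ((euler + h • W1op + h ^ 2 • W2op) ∘ₗ Gsato h k - Gsato h k ∘ₗ euler) =
      (3 * ((N : ℂ) + 1)) • Gsato h (N + 1) + h ^ 2 • (W2op ∘ₗ Gsato h N)
  | 0 => by
    rw [sum_range_one, kacSchwarz_comp_Gsato_sub, Nat.cast_zero, zero_add, mul_one,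
      smul_Gsato_one, mul_zero, neg_zero, zero_smul, zero_add]
  | N + 1 => by
    rw [sum_range_succ, sum_kacSchwarz_comp_Gsato_sub N, kacSchwarz_comp_Gsato_sub,
      show 3 * (((N + 1 : ℕ) : ℂ) + 1) = 3 * ((N : ℂ) + 2) by push_cast; ring,
      smul_Gsato_add_two]
    push_cast
    module

theorem degBoundedOp_sum_kacSchwarz_comp_Gsato_sub (N : ℕ) :
    DegBoundedOp (∑ k ∈ range (N + 1),
      ((euler + h • W1op + h ^ 2 • W2op) ∘ₗ Gsato h k - Gsato h k ∘ₗ euler)) (-(3 * (N + 1))) := by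
  rw [sum_kacSchwarz_comp_Gsato_sub]
  have hW2 := (isHomogeneousOp_W2op.comp (isHomogeneousOp_Gsato h N)).degBoundedOp
  exact (((isHomogeneousOp_Gsato h (N + 1)).degBoundedOp.smul _).add
    ((hW2.mono (by omega)).smul _)).mono (by push_cast; omega)

def GsatoSum (p : H) : H :=
  (summableFamilyOfDegLE (fun k => Gsato h k p) (-p.order)
    fun k => (degLE_Gsato h k (degLE_neg_order p)).mono (by omega)).hsum

theorem degLE_GsatoSum_sub {p : H} {d : ℤ} (hp : degLE p d) (N : ℕ) :
    degLE (GsatoSum h p - ∑ k ∈ range N, Gsato h k p) (d - 3 * N) :=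
  degLE_hsum_sub_sum (summableFamilyOfDegLE _ _ _) fun k hk =>
    (degLE_Gsato h k hp).mono (by omega)

theorem kacSchwarz_GsatoSum (p : H) :
    (euler + h • W1op + h ^ 2 • W2op) (GsatoSum h p) = GsatoSum h (euler p) := by
  set L := euler + h • W1op + h ^ 2 • W2op
  have hp := degLE_neg_order p
  refine sub_eq_zero.mp (eq_zero_of_forall_degLE (d := -p.order) fun N => ?_)
  have hsplit : L (GsatoSum h p) - GsatoSum h (euler p) =
      L (GsatoSum h p - ∑ k ∈ range (N + 1), Gsato h k p)
        + (∑ k ∈ range (N + 1), (L ∘ₗ Gsato h k - Gsato h k ∘ₗ euler)) p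
        - (GsatoSum h (euler p) - ∑ k ∈ range (N + 1), Gsato h k (euler p)) := by
    simp only [LinearMap.sum_apply, LinearMap.sub_apply, LinearMap.comp_apply, sum_sub_distrib,
      map_sub, map_sum]
    abel
  set e : ℤ := -p.order - 3 * (N + 1)
  have hHead : degLE (L (GsatoSum h p - ∑ k ∈ range (N + 1), Gsato h k p)) e :=
    (degBoundedOp_kacSchwarz h (degLE_GsatoSum_sub h hp (N + 1))).mono (by omega)
  have hDefect := (degBoundedOp_sum_kacSchwarz_comp_Gsato_sub h N hp).mono (e := e) (by omega)
  have hTail := degLE_GsatoSum_sub h (isHomogeneousOp_euler.degBoundedOp hp) (N + 1)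
  rw [hsplit]
  exact ((hHead.add hDefect).sub (hTail.mono (by omega))).mono (by omega)

end Sato

/-- The components `G^{(k)}` lower the degree of polynomials by `3k`, so
`G = Σ_k G^{(k)}` is well defined on `ℂ[z]`, and it satisfies `Q∘P∘G = G∘(z·d/dz)` on `ℂ[z]`,
where `Q = M_z + ħW` and `P = d/dz + (ħ/2)W²` are the canonical Kac–Schwarz operators of the
Kontsevich–Witten model. -/
theorem KW_sato_recursion (h : ℂ) :
    (∀ (k : ℕ), ∀ p ∈ Hplus, ∀ d : ℤ, degLE p d → degLE ((Gsato h k) p) (d - 3 * k)) ∧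
    ∃ G : H → H,
      (∀ p ∈ Hplus, ∀ d : ℤ, degLE p d → ∀ N : ℕ,
        degLE (G p - ∑ k ∈ Finset.range N, (Gsato h k) p) (d - 3 * N)) ∧
      (∀ p ∈ Hplus,
        (Mz + h • Wop) ((Dz + (h / 2) • (Wop ∘ₗ Wop)) (G p)) = G (zH * Dz p)) := by
  refine ⟨fun k p _ d hp => degLE_Gsato h k hp, GsatoSum h,
    fun p _ d hp N => degLE_GsatoSum_sub h hp N, fun p _ => ?_⟩
  rw [← LinearMap.comp_apply, kacSchwarz_comp, kacSchwarz_GsatoSum]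
  rfl
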